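/- arXiv:2002.00650 — 4 statements merged into one kernel-verified Lean document; each statement's English description precedes it below -/
import Mathlib

section
/- Define hyperharmonic numbers by H_1^(n) = Σ_{k=1}^n 1/k and H_r^(n) = Σ_{k=1}^n H_{r-1}^(k)/k for r ≥ 2. Then for all r ≥ 1 and n ≥ 1, H_r^(n) = Σ_{k=1}^n binom(n,k) (−1)^{k+1} / k^r. -/
/-!
Dividing by `m` and summing over `1 ≤ m ≤ n` sends `C(m,k)` to `C(n,k)/k`, by the hockey-stick
identity `∑_{m=k}^n C(m,k)/m = C(n,k)/k` (from `C(m,k)/m = C(m-1,k-1)/k`). So the hyperharmonic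
recursion raises the exponent of `k` in `∑_k C(n,k)(-1)^(k+1)/k^r` by one, and it starts from
`∑_k C(m,k)(-1)^(k+1) = 1`, which turns `H_1^(n) = ∑ 1/m` into the case `r = 1`.
-/

open Finset

theorem Nat.sum_Icc_cast_choose_mul_neg_one_pow_succ {R : Type*} [CommRing R] {m : ℕ}
    (hm : m ≠ 0) :
    ∑ k ∈ Icc 1 m, (m.choose k : R) * (-1) ^ (k + 1) = 1 := by
  have h := congrArg (Int.cast (R := R)) (Int.alternating_sum_range_choose_of_ne hm)
  rw [range_succ_eq_Icc_zero, ← insert_Icc_add_one_left_eq_Icc (Nat.zero_le m),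
    sum_insert (by simp)] at h
  push_cast [Nat.choose_zero_right] at h
  simp_rw [pow_succ, mul_neg_one, mul_neg, sum_neg_distrib, mul_comm (m.choose _ : R)]
  linear_combination -h

section
variable {K : Type*} [Field K] [CharZero K]

theorem Nat.cast_choose_succ_div_succ (n j : ℕ) :
    ((n + 1).choose (j + 1) : K) / (n + 1) = (n.choose j : K) / (j + 1) := by
  rw [div_eq_div_iff (Nat.cast_add_one_ne_zero n) (Nat.cast_add_one_ne_zero j)]
  norm_cast
  rw [mul_comm (n.choose j)]
  exact (Nat.add_one_mul_choose_eq n j).symm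

theorem Nat.sum_Icc_cast_choose_div (n j : ℕ) :
    ∑ m ∈ Icc 1 n, (m.choose (j + 1) : K) / m = (n.choose (j + 1) : K) / (j + 1) := by
  induction n with
  | zero => simp
  | succ n ih =>
    rw [sum_Icc_succ_top (by omega), ih, Nat.cast_add_one, Nat.cast_choose_succ_div_succ,
      Nat.choose_succ_succ', Nat.cast_add, add_div, add_comm]

theorem Nat.sum_Icc_div_sum_Icc_cast_choose_mul (c : ℕ → K) (n : ℕ) :
    ∑ m ∈ Icc 1 n, (∑ k ∈ Icc 1 m, (m.choose k : K) * c k) / m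
      = ∑ k ∈ Icc 1 n, (n.choose k : K) * c k / k := by
  calc _ = ∑ m ∈ Icc 1 n, ∑ k ∈ Icc 1 n, (m.choose k : K) / m * c k := by
        refine sum_congr rfl fun m hm => ?_
        simp_rw [sum_div, div_mul_eq_mul_div]
        refine sum_subset (Icc_subset_Icc_right (mem_Icc.1 hm).2) fun k hkn hkm => ?_
        rw [Nat.choose_eq_zero_of_lt (by grind), Nat.cast_zero, zero_mul, zero_div]
    _ = ∑ k ∈ Icc 1 n, (∑ m ∈ Icc 1 n, (m.choose k : K) / m) * c k := by
        rw [sum_comm]; simp_rw [sum_mul]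
    _ = _ := by
        refine sum_congr rfl fun k hk => ?_
        obtain ⟨j, rfl⟩ := Nat.exists_eq_add_of_le' (mem_Icc.1 hk).1
        rw [Nat.sum_Icc_cast_choose_div]
        push_cast; ring
end

/-- Hyperharmonic numbers `H_r^(n)` (defined by `H_1^(n) = ∑_{k=1}^n 1/k`,
`H_r^(n) = ∑_{k=1}^n H_{r-1}^(k)/k`) satisfy
`H_r^(n) = ∑_{k=1}^n C(n,k) (−1)^{k+1} / k^r` for all `r, n ≥ 1`. -/
theorem hyperharmonic_alternating_sum
    (H : ℕ → ℕ → ℝ)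
    (hH1 : ∀ n : ℕ, H 1 n = ∑ k ∈ Icc 1 n, (1 : ℝ) / k)
    (hHr : ∀ r : ℕ, 2 ≤ r → ∀ n : ℕ, H r n = ∑ k ∈ Icc 1 n, H (r - 1) k / k) :
    ∀ r : ℕ, 1 ≤ r → ∀ n : ℕ, 1 ≤ n →
      H r n = ∑ k ∈ Icc 1 n, (n.choose k : ℝ) * (-1) ^ (k + 1) / (k : ℝ) ^ r := by
  intro r hr
  induction r, hr using Nat.le_induction with
  | base =>
    intro n _
    calc H 1 n = ∑ m ∈ Icc 1 n, (∑ k ∈ Icc 1 m, (m.choose k : ℝ) * (-1) ^ (k + 1)) / m := by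
          refine (hH1 n).trans (sum_congr rfl fun m hm => ?_)
          rw [Nat.sum_Icc_cast_choose_mul_neg_one_pow_succ (by grind)]
      _ = _ := by simp_rw [Nat.sum_Icc_div_sum_Icc_cast_choose_mul, pow_one]
  | succ r _ ih =>
    intro n _
    calc H (r + 1) n
        = ∑ m ∈ Icc 1 n, (∑ k ∈ Icc 1 m, (m.choose k : ℝ) * ((-1) ^ (k + 1) / k ^ r)) / m := by
          refine (hHr (r + 1) (by omega) n).trans (sum_congr rfl fun m hm => ?_)
          simp_rw [Nat.add_sub_cancel, ih m (mem_Icc.1 hm).1, mul_div_assoc]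
      _ = _ := by
          rw [Nat.sum_Icc_div_sum_Icc_cast_choose_mul]
          simp_rw [pow_succ, mul_div_assoc, div_div]
end

section
/- Let H_r^(n) be the hyperharmonic numbers defined by H_1^(n) = Σ_{k=1}^n 1/k and H_r^(n) = Σ_{k=1}^n H_{r-1}^(k)/k for r ≥ 2. Then for every fixed r ≥ 1, r!·H_r^(n) / (ln n)^r → 1 as n → ∞. -/
/-!
Write `h n` for the harmonic number `H_1^(n)`. Since `1 / k = h k - h (k - 1)`, the recursion reads
`r! H_r^(n) = r ∑_{k ≤ n} (r-1)! H_{r-1}^(k) (h k - h (k - 1))`, a Riemann–Stieltjes sum for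
`∫ r x^(r-1) dx` along the increments of `h`. Comparing each term with the increment of `x ^ r`,
using only `0 ≤ h k - h (k - 1) ≤ 1`, gives by induction on `r`
`h n ^ r ≤ r! H_r^(n) ≤ (h n + r - 1) ^ r`, and both bounds are asymptotic to `(ln n) ^ r`
because `h n - ln n` converges (to Euler's constant).
-/

open Finset Filter Topology

section PowSub

variable {R : Type*} [CommRing R] {a c : R}

theorem pow_succ_sub_pow_succ_eq_sum (m : ℕ) :
    a ^ (m + 1) - c ^ (m + 1) = (∑ i ∈ range (m + 1), a ^ i * c ^ (m - i)) * (a - c) := by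
  rw [← geom_sum₂_mul]; rfl

variable [LinearOrder R] [IsOrderedRing R]

theorem pow_mul_pow_sub_mem_Icc {m i : ℕ} (hi : i ≤ m) (hc : 0 ≤ c) (hca : c ≤ a) :
    a ^ i * c ^ (m - i) ∈ Set.Icc (c ^ m) (a ^ m) := by
  have ha : 0 ≤ a := hc.trans hca
  constructor
  · calc c ^ m = c ^ i * c ^ (m - i) := by rw [← pow_add, Nat.add_sub_cancel' hi]
      _ ≤ a ^ i * c ^ (m - i) := by gcongr
  · calc a ^ i * c ^ (m - i) ≤ a ^ i * a ^ (m - i) := by gcongr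
      _ = a ^ m := by rw [← pow_add, Nat.add_sub_cancel' hi]

theorem mul_pow_mul_sub_le_pow_succ_sub_pow_succ (m : ℕ) (hc : 0 ≤ c) (hca : c ≤ a) :
    (m + 1) * c ^ m * (a - c) ≤ a ^ (m + 1) - c ^ (m + 1) := by
  rw [pow_succ_sub_pow_succ_eq_sum]
  gcongr
  simpa using card_nsmul_le_sum (range (m + 1)) _ _ fun i hi =>
    (pow_mul_pow_sub_mem_Icc (Nat.lt_succ_iff.1 (mem_range.1 hi)) hc hca).1

theorem pow_succ_sub_pow_succ_le_mul_pow_mul_sub (m : ℕ) (hc : 0 ≤ c) (hca : c ≤ a) :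
    a ^ (m + 1) - c ^ (m + 1) ≤ (m + 1) * a ^ m * (a - c) := by
  rw [pow_succ_sub_pow_succ_eq_sum]
  gcongr
  simpa using sum_le_card_nsmul (range (m + 1)) _ _ fun i hi =>
    (pow_mul_pow_sub_mem_Icc (Nat.lt_succ_iff.1 (mem_range.1 hi)) hc hca).2

end PowSub

section Telescope

variable {R : Type*} [CommRing R] [LinearOrder R] [IsOrderedRing R] {u : ℕ → R}

theorem pow_succ_sub_pow_succ_le_sum (hu : Monotone u) (hu0 : 0 ≤ u 0) (m n : ℕ) :
    u n ^ (m + 1) - u 0 ^ (m + 1)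
      ≤ (m + 1) * ∑ i ∈ range n, u (i + 1) ^ m * (u (i + 1) - u i) := by
  rw [← sum_range_sub (fun k => u k ^ (m + 1)), mul_sum]
  gcongr with i
  rw [← mul_assoc]
  exact pow_succ_sub_pow_succ_le_mul_pow_mul_sub m (hu0.trans (hu i.zero_le)) (hu i.le_succ)

theorem sum_le_add_one_pow_sub (hu : Monotone u) (hu0 : 0 ≤ u 0)
    (hstep : ∀ i, u (i + 1) ≤ u i + 1) (m n : ℕ) :
    (m + 1) * ∑ i ∈ range n, u (i + 1) ^ m * (u (i + 1) - u i)
      ≤ (u n + 1) ^ (m + 1) - (u 0 + 1) ^ (m + 1) := by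
  rw [← sum_range_sub (fun k => (u k + 1) ^ (m + 1)), mul_sum]
  gcongr with i
  have hi : 0 ≤ u i := hu0.trans (hu i.zero_le)
  have hii : u i ≤ u (i + 1) := hu i.le_succ
  calc (m + 1) * (u (i + 1) ^ m * (u (i + 1) - u i))
      ≤ (m + 1) * (u i + 1) ^ m * ((u (i + 1) + 1) - (u i + 1)) := by
        rw [add_sub_add_right_eq_sub, ← mul_assoc]
        have hstep_nonneg : 0 ≤ u (i + 1) - u i := sub_nonneg.2 hii
        gcongr
        · exact add_nonneg m.cast_nonneg zero_le_one
        · exact hi.trans hii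
        · exact hstep i
    _ ≤ _ := mul_pow_mul_sub_le_pow_succ_sub_pow_succ m (add_nonneg hi zero_le_one)
        (add_le_add_left hii 1)

end Telescope

theorem Finset.sum_Icc_one_eq_sum_range {M : Type*} [AddCommMonoid M] (f : ℕ → M) (n : ℕ) :
    ∑ k ∈ Icc 1 n, f k = ∑ i ∈ range n, f (i + 1) := by
  rw [range_eq_Ico, sum_Ico_add' f 0 n 1, zero_add, Ico_add_one_right_eq_Icc]

theorem monotone_harmonic : Monotone fun n => (harmonic n : ℝ) :=
  monotone_nat_of_le_succ fun n => by
    rw [harmonic_succ, Rat.cast_add]; exact le_add_of_nonneg_right (by positivity)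

theorem harmonic_succ_sub_harmonic (n : ℕ) :
    (harmonic (n + 1) : ℝ) - harmonic n = 1 / (n + 1) := by
  rw [harmonic_succ]; push_cast; ring

theorem harmonic_succ_le_harmonic_add_one (n : ℕ) :
    (harmonic (n + 1) : ℝ) ≤ harmonic n + 1 := by
  rw [← sub_le_iff_le_add', harmonic_succ_sub_harmonic, div_le_one (by positivity)]
  exact le_add_of_nonneg_left n.cast_nonneg

theorem tendsto_harmonic_add_div_log (d : ℝ) :
    Tendsto (fun n : ℕ => ((harmonic n : ℝ) + d) / Real.log n) atTop (𝓝 1) := by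
  have hlog : Tendsto (fun n : ℕ => Real.log n) atTop atTop :=
    Real.tendsto_log_atTop.comp tendsto_natCast_atTop_atTop
  have hrem := (Real.tendsto_harmonic_sub_log.add_const d).div_atTop hlog
  simpa using (hrem.const_add 1).congr' <| by
    filter_upwards [hlog.eventually_gt_atTop 0] with n hn
    field_simp
    ring

section Hyperharmonic

variable {H : ℕ → ℕ → ℝ}

theorem factorial_mul_hyperharmonic_succ
    (hHsucc : ∀ m n, H (m + 2) n = ∑ i ∈ range n, H (m + 1) (i + 1) / (i + 1)) (m n : ℕ) :
    ((m + 2).factorial : ℝ) * H (m + 2) n = (m + 2) * ∑ i ∈ range n,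
      ((m + 1).factorial * H (m + 1) (i + 1)) * (harmonic (i + 1) - harmonic i : ℝ) := by
  simp only [hHsucc, harmonic_succ_sub_harmonic, mul_sum, Nat.factorial_succ (m + 1)]
  refine sum_congr rfl fun i _ => ?_
  push_cast
  ring

theorem harmonic_pow_le_factorial_mul (hH1 : ∀ n, H 1 n = harmonic n)
    (hHsucc : ∀ m n, H (m + 2) n = ∑ i ∈ range n, H (m + 1) (i + 1) / (i + 1)) (m n : ℕ) :
    (harmonic n : ℝ) ^ (m + 1) ≤ (m + 1).factorial * H (m + 1) n := by
  induction m generalizing n with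
  | zero => simp [hH1]
  | succ m ih =>
    rw [factorial_mul_hyperharmonic_succ hHsucc]
    calc (harmonic n : ℝ) ^ (m + 2)
        = harmonic n ^ (m + 2) - (harmonic 0 : ℝ) ^ (m + 2) := by simp
      _ ≤ (m + 2) * ∑ i ∈ range n,
            (harmonic (i + 1) : ℝ) ^ (m + 1) * (harmonic (i + 1) - harmonic i) := by
        exact_mod_cast pow_succ_sub_pow_succ_le_sum monotone_harmonic (by simp) (m + 1) n
      _ ≤ _ := by
        gcongr with i
        · exact sub_nonneg.2 (monotone_harmonic i.le_succ)
        · exact ih (i + 1)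

theorem factorial_mul_le_harmonic_add_pow (hH1 : ∀ n, H 1 n = harmonic n)
    (hHsucc : ∀ m n, H (m + 2) n = ∑ i ∈ range n, H (m + 1) (i + 1) / (i + 1)) (m n : ℕ) :
    (m + 1).factorial * H (m + 1) n ≤ ((harmonic n : ℝ) + m) ^ (m + 1) := by
  induction m generalizing n with
  | zero => simp [hH1]
  | succ m ih =>
    rw [factorial_mul_hyperharmonic_succ hHsucc]
    have hstep (i : ℕ) : (harmonic (i + 1) : ℝ) + m ≤ harmonic i + m + 1 := by
      linarith [harmonic_succ_le_harmonic_add_one i]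
    calc (m + 2) * ∑ i ∈ range n,
          ((m + 1).factorial * H (m + 1) (i + 1)) * (harmonic (i + 1) - harmonic i : ℝ)
        ≤ (m + 2) * ∑ i ∈ range n, ((harmonic (i + 1) : ℝ) + m) ^ (m + 1) *
            ((harmonic (i + 1) + m) - (harmonic i + m)) := by
          simp_rw [add_sub_add_right_eq_sub]
          gcongr with i
          · exact sub_nonneg.2 (monotone_harmonic i.le_succ)
          · exact ih (i + 1)
      _ ≤ ((harmonic n : ℝ) + m + 1) ^ (m + 2) - ((harmonic 0 : ℝ) + m + 1) ^ (m + 2) := by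
          exact_mod_cast sum_le_add_one_pow_sub (monotone_harmonic.add_const (m : ℝ))
            (by simp) hstep (m + 1) n
      _ ≤ _ := by
          rw [harmonic_zero, Nat.cast_succ, ← add_assoc]
          exact sub_le_self _ (by positivity)

end Hyperharmonic

/-- For hyperharmonic numbers `H_r^(n)`, for each fixed `r ≥ 1`,
`r! · H_r^(n) / (ln n)^r → 1` as `n → ∞`. -/
theorem hyperharmonic_asymptotics
    (H : ℕ → ℕ → ℝ)
    (hH1 : ∀ n : ℕ, H 1 n = ∑ k ∈ Icc 1 n, (1 : ℝ) / k)
    (hHr : ∀ r : ℕ, 2 ≤ r → ∀ n : ℕ, H r n = ∑ k ∈ Icc 1 n, H (r - 1) k / k)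
    (r : ℕ) (hr : 1 ≤ r) :
    Tendsto (fun n : ℕ => (Nat.factorial r : ℝ) * H r n / (Real.log n) ^ r)
      atTop (nhds 1) := by
  have hH1' (n : ℕ) : H 1 n = harmonic n := by
    simp [hH1, sum_Icc_one_eq_sum_range, harmonic]
  have hHsucc (m n : ℕ) : H (m + 2) n = ∑ i ∈ range n, H (m + 1) (i + 1) / (i + 1) := by
    simp [hHr (m + 2) (by omega), sum_Icc_one_eq_sum_range]
  obtain ⟨m, rfl⟩ := Nat.exists_eq_add_of_le' hr
  have hlower := (tendsto_harmonic_add_div_log 0).pow (m + 1)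
  have hupper := (tendsto_harmonic_add_div_log m).pow (m + 1)
  rw [one_pow] at hlower hupper
  have hlog : ∀ᶠ n : ℕ in atTop, 0 < Real.log n :=
    (Real.tendsto_log_atTop.comp tendsto_natCast_atTop_atTop).eventually_gt_atTop 0
  refine tendsto_of_tendsto_of_tendsto_of_le_of_le' hlower hupper ?_ ?_
  · filter_upwards [hlog] with n hn
    rw [div_pow]
    gcongr
    simpa using harmonic_pow_le_factorial_mul hH1' hHsucc m n
  · filter_upwards [hlog] with n hn
    rw [div_pow]
    gcongr
    exact factorial_mul_le_harmonic_add_pow hH1' hHsucc m n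
end

section
/- For a fixed integer r ≥ 0 and a Borel set B ⊆ R that is bounded from below, let P^(n) = ∫_B (x+ln n)^r e^{-x}/(n·r!) · 1{x ≥ −ln n} dx be the probability that ψ(Z_r^(n)) ∈ B, where Z_r^(n) ~ Gamma(r+1, rate 1/n) and ψ(x) = x/n − ln n. Then n·(ln n)^{-r}·P^(n) → (1/r!) ∫_B e^{-x} dx as n → ∞. -/
open MeasureTheory Filter Set Asymptotics Real

/-!
Multiplying by `n / (ln n)^r` turns the integrand into `(1 + x / ln n)^r e^{-x} / r!` on
`x ≥ -ln n`. Once `ln n ≥ 1` this is dominated by `(1 + |x|)^r e^{-x} / r!`, which is integrable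
on `B` because `B` is bounded below, and it tends pointwise to `e^{-x} / r!`; dominated convergence
concludes.
-/

lemma isBigO_one_add_abs_pow_mul_exp_neg (r : ℕ) :
    (fun x : ℝ => (1 + |x|) ^ r * exp (-x)) =O[atTop] fun x => exp (-(1 / 2) * x) := by
  have h_lin : (fun x : ℝ => 1 + |x|) =O[atTop] fun x => x :=
    IsBigO.of_bound 2 <| by
      filter_upwards [eventually_ge_atTop 1] with x hx
      rw [norm_eq_abs, norm_eq_abs, abs_of_pos (by positivity : (0 : ℝ) < 1 + |x|),
        abs_of_pos (by linarith : 0 < x)]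
      linarith
  refine ((h_lin.pow r).trans (isLittleO_pow_exp_pos_mul_atTop r one_half_pos).isBigO).mul
    (isBigO_refl (fun x => exp (-x)) atTop) |>.congr_right fun x => ?_
  rw [← exp_add]
  ring_nf

lemma integrableOn_Ici_one_add_abs_pow_mul_exp_neg (r : ℕ) (a : ℝ) :
    IntegrableOn (fun x : ℝ => (1 + |x|) ^ r * exp (-x)) (Ici a) :=
  (integrableOn_Ici_iff_integrableOn_Ioi).mpr <|
    integrable_of_isBigO_exp_neg one_half_pos (by fun_prop)
      (isBigO_one_add_abs_pow_mul_exp_neg r)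

lemma abs_one_add_div_le {x L : ℝ} (hL : 1 ≤ L) : |1 + x / L| ≤ 1 + |x| := by
  calc |1 + x / L| ≤ 1 + |x| / L := by
        simpa [abs_div, abs_of_pos (by linarith : 0 < L)] using abs_add_le 1 (x / L)
    _ ≤ 1 + |x| := by gcongr; exact div_le_self (abs_nonneg x) hL

lemma tendsto_setIntegral_one_add_div_pow_mul_exp_neg {ι : Type*} {l : Filter ι}
    [l.IsCountablyGenerated] {L : ι → ℝ} (hL : Tendsto L l atTop) (r : ℕ) {B : Set ℝ}
    (hB : BddBelow B) :
    Tendsto (fun i => ∫ x in B, if -L i ≤ x then (1 + x / L i) ^ r * exp (-x) else 0) l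
      (nhds (∫ x in B, exp (-x))) := by
  obtain ⟨a, ha⟩ := hB
  refine tendsto_integral_filter_of_dominated_convergence
    (fun x => (1 + |x|) ^ r * exp (-x)) ?_ ?_
    ((integrableOn_Ici_one_add_abs_pow_mul_exp_neg r a).mono_set ha) ?_
  · exact Eventually.of_forall fun i =>
      (Measurable.ite measurableSet_Ici (by fun_prop) measurable_const).aestronglyMeasurable
  · filter_upwards [hL.eventually_ge_atTop 1] with i hi
    refine Eventually.of_forall fun x => ?_
    split_ifs
    · rw [norm_mul, norm_pow, norm_eq_abs, norm_of_nonneg (exp_nonneg _)]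
      gcongr
      exact abs_one_add_div_le hi
    · rw [norm_zero]
      positivity
  · refine Eventually.of_forall fun x => ?_
    have h_lim : Tendsto (fun i => (1 + x / L i) ^ r * exp (-x)) l (nhds (exp (-x))) := by
      simpa using ((tendsto_const_nhds.div_atTop hL).const_add 1 |>.pow r).mul_const (exp (-x))
    refine h_lim.congr' ?_
    filter_upwards [hL.eventually_ge_atTop (-x)] with i hi
    rw [if_pos (by linarith)]

lemma rescaled_shifted_gamma_density_eq {n L x : ℝ} (r : ℕ) (hn : n ≠ 0) (hL : L ≠ 0) :
    n / L ^ r * ((x + L) ^ r * exp (-x) / (n * r.factorial)) =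
      1 / r.factorial * ((1 + x / L) ^ r * exp (-x)) := by
  rw [show 1 + x / L = (x + L) / L by field_simp; ring, div_pow]
  field_simp

theorem limit_single_probability_general
    (r : ℕ) (B : Set ℝ) (hBbd : BddBelow B) :
    Tendsto (fun n : ℕ =>
        (n : ℝ) / (Real.log n) ^ r *
          ∫ x in B, (if -Real.log n ≤ x then
            (x + Real.log n) ^ r * Real.exp (-x) / (n * (Nat.factorial r : ℝ))
          else 0))
      atTop
      (nhds ((1 / (Nat.factorial r : ℝ)) * ∫ x in B, Real.exp (-x))) := by
  have h_log : Tendsto (fun n : ℕ => log n) atTop atTop :=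
    tendsto_log_atTop.comp tendsto_natCast_atTop_atTop
  refine ((tendsto_setIntegral_one_add_div_pow_mul_exp_neg h_log r hBbd).const_mul _).congr' ?_
  filter_upwards [h_log.eventually_gt_atTop 0, eventually_gt_atTop 0] with n h_log_pos hn
  rw [← integral_const_mul, ← integral_const_mul]
  congr 1 with x
  split_ifs
  · exact (rescaled_shifted_gamma_density_eq r (by positivity) h_log_pos.ne').symm
  · simp

/-- With `P^(n) = ∫_B (x+ln n)^r e^{-x}/(n·r!) · 1{x ≥ −ln n} dx` (the probability
that `ψ(Z_r^(n)) ∈ B` for `Z_r^(n) ~ Gamma(r+1, rate 1/n)` and a Borel set `B`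
bounded from below), one has `n·(ln n)^{-r}·P^(n) → (1/r!) ∫_B e^{-x} dx`. -/
theorem limit_single_probability
    (r : ℕ) (B : Set ℝ) (hB : MeasurableSet B) (hBbd : BddBelow B) :
    Tendsto (fun n : ℕ =>
        (n : ℝ) / (Real.log n) ^ r *
          ∫ x in B, (if -Real.log n ≤ x then
            (x + Real.log n) ^ r * Real.exp (-x) / (n * (Nat.factorial r : ℝ))
          else 0))
      atTop
      (nhds ((1 / (Nat.factorial r : ℝ)) * ∫ x in B, Real.exp (-x))) :=
  limit_single_probability_general r B hBbd
end

section
/- For integers 0 ≤ r_1 < r_2 and Borel sets B_{r_1}, B_{r_2} ⊆ R bounded from below, let P^(n) = P{ψ(Z_{r_1}^(n)) ∈ B_{r_1}, ψ(Z_{r_2}^(n)) ∈ B_{r_2}}, where (Z_{r_1}^(n), Z_{r_2}^(n)) has the joint gamma structure with increments Exp(1/n) and ψ(x) = x/n − ln n. Then n·(ln n)^{-r_1-r_2}·P^(n) → 0 as n → ∞. -/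
/-! With `L = ln n`, the joint density of `(ψ(Z_{r₁}), ψ(Z_{r₂}))` is
`(x + L)^{r₁} (y - x)^{r₂-r₁-1} e^{-y} / (n r₁! (r₂-r₁-1)!)` on `-L ≤ x ≤ y`. On a quadrant
`[c, ∞)²` with `c ≤ 0` and `L ≥ 1` we have `x + L ≤ L (y - c + 1)` and `y - x ≤ y - c + 1`, and the
resulting polynomial in `y` is absorbed by half of the factor `e^{-y}`. Hence the density is at
most `L^{r₁} / n` times a fixed integrable function `C e^{-x/4} e^{-y/4}`, so that
`n P^(n) = O((ln n)^{r₁})`, which is `o((ln n)^{r₁+r₂})` because `r₂ > 0`. -/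

open MeasureTheory Filter Real Set
open scoped Nat

section SetIntegral

variable {α β : Type*} [MeasurableSpace α] [MeasurableSpace β] {μ : Measure α} {ν : Measure β}

theorem setIntegral_le_setIntegral_of_subset_of_le {s t : Set α} (hst : s ⊆ t)
    (ht : MeasurableSet t) {f g : α → ℝ} (hf : 0 ≤ f) (hg : IntegrableOn g t μ)
    (hfg : ∀ x ∈ t, f x ≤ g x) :
    ∫ x in s, f x ∂μ ≤ ∫ x in t, g x ∂μ :=
  calc ∫ x in s, f x ∂μ ≤ ∫ x in s, g x ∂μ :=
        integral_mono_of_nonneg (ae_of_all _ hf) (hg.mono_set hst)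
          (ae_restrict_of_ae_restrict_of_subset hst (ae_restrict_of_forall_mem ht hfg))
    _ ≤ ∫ x in t, g x ∂μ :=
        setIntegral_mono_set hg
          (ae_restrict_of_forall_mem ht fun x hx => (hf x).trans (hfg x hx)) hst.eventuallyLE

theorem setIntegral_setIntegral_le_mul_of_le_mul {s S : Set α} {t T : Set β} (hsS : s ⊆ S)
    (htT : t ⊆ T) (hS : MeasurableSet S) (hT : MeasurableSet T) {f : α → β → ℝ} {g : α → ℝ}
    {h : β → ℝ} (hf : ∀ x y, 0 ≤ f x y) (hg : IntegrableOn g S μ) (hh : IntegrableOn h T ν)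
    (hfgh : ∀ x ∈ S, ∀ y ∈ T, f x y ≤ g x * h y) :
    ∫ x in s, ∫ y in t, f x y ∂ν ∂μ ≤ (∫ x in S, g x ∂μ) * ∫ y in T, h y ∂ν := by
  have inner (x : α) (hx : x ∈ S) : ∫ y in t, f x y ∂ν ≤ g x * ∫ y in T, h y ∂ν := by
    rw [← integral_const_mul]
    exact setIntegral_le_setIntegral_of_subset_of_le htT hT (hf x) (hh.const_mul _)
      (hfgh x hx)
  calc ∫ x in s, ∫ y in t, f x y ∂ν ∂μ ≤ ∫ x in S, g x * ∫ y in T, h y ∂ν ∂μ :=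
        setIntegral_le_setIntegral_of_subset_of_le hsS hS
          (fun x => integral_nonneg (hf x)) (hg.mul_const _) inner
    _ = _ := integral_mul_const _ _

end SetIntegral

theorem pow_le_factorial_mul_inv_pow_mul_exp {b t : ℝ} (hb : 0 < b) (ht : 0 ≤ t) (m : ℕ) :
    t ^ m ≤ m ! * b⁻¹ ^ m * exp (b * t) := by
  have h := pow_div_factorial_le_exp _ (mul_nonneg hb.le ht) m
  rw [div_le_iff₀ (by positivity), mul_pow] at h
  calc t ^ m = b ^ m * t ^ m / b ^ m := by field_simp
    _ ≤ exp (b * t) * m ! / b ^ m := by gcongr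
    _ = m ! * b⁻¹ ^ m * exp (b * t) := by rw [inv_pow]; ring

section GammaPairDensity

variable {a b : ℕ} {L D x y : ℝ}

theorem gammaPairDensity_nonneg (hD : 0 ≤ D) :
    0 ≤ if -L ≤ x ∧ x ≤ y then (x + L) ^ a * (y - x) ^ b * exp (-y) / D else 0 := by
  split_ifs with h
  · have hxL : 0 ≤ x + L := by linarith [h.1]
    have hyx : 0 ≤ y - x := sub_nonneg.2 h.2
    positivity
  · exact le_rfl

theorem gammaPairDensity_le {c : ℝ} (hc : c ≤ 0) (hL : 1 ≤ L) (hD : 0 ≤ D) (hx : c ≤ x)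
    (hy : c ≤ y) :
    (if -L ≤ x ∧ x ≤ y then (x + L) ^ a * (y - x) ^ b * exp (-y) / D else 0) ≤
      L ^ a * ((a + b) ! * 2 ^ (a + b) * exp ((1 - c) / 2)) / D * exp (-4⁻¹ * x) *
        exp (-4⁻¹ * y) := by
  split_ifs with h
  · obtain ⟨hLx, hxy⟩ := h
    set t := y - c + 1
    have hLt : x + L ≤ L * t := by nlinarith
    have hpoly : t ^ (a + b) ≤ (a + b) ! * 2 ^ (a + b) * exp (t / 2) := by
      simpa [div_eq_inv_mul] using
        pow_le_factorial_mul_inv_pow_mul_exp (b := 2⁻¹) (by norm_num) (by linarith) (a + b)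
    have hexp : exp (t / 2) * exp (-y) ≤ exp ((1 - c) / 2) * (exp (-4⁻¹ * x) * exp (-4⁻¹ * y)) := by
      simp only [← exp_add, exp_le_exp, t]
      linarith
    rw [div_mul_eq_mul_div, div_mul_eq_mul_div]
    gcongr ?_ / D
    calc (x + L) ^ a * (y - x) ^ b * exp (-y) ≤ (L * t) ^ a * t ^ b * exp (-y) := by
          gcongr <;> linarith
      _ = L ^ a * t ^ (a + b) * exp (-y) := by rw [mul_pow, pow_add]; ring
      _ ≤ L ^ a * ((a + b) ! * 2 ^ (a + b) * exp (t / 2)) * exp (-y) := by gcongr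
      _ = L ^ a * ((a + b) ! * 2 ^ (a + b)) * (exp (t / 2) * exp (-y)) := by ring
      _ ≤ L ^ a * ((a + b) ! * 2 ^ (a + b)) *
            (exp ((1 - c) / 2) * (exp (-4⁻¹ * x) * exp (-4⁻¹ * y))) := by gcongr
      _ = _ := by ring
  · positivity

end GammaPairDensity

theorem limit_pair_probability_general
    (r₁ r₂ : ℕ) (hr : r₁ < r₂)
    (B₁ B₂ : Set ℝ) (hB₁bd : BddBelow B₁) (hB₂bd : BddBelow B₂) :
    Tendsto (fun n : ℕ =>
        (n : ℝ) / (Real.log n) ^ (r₁ + r₂) *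
          ∫ x in B₁, ∫ y in B₂,
            (if -Real.log n ≤ x ∧ x ≤ y then
              (x + Real.log n) ^ r₁ * (y - x) ^ (r₂ - r₁ - 1) * Real.exp (-y)
                / (n * (Nat.factorial r₁ : ℝ) * (Nat.factorial (r₂ - r₁ - 1) : ℝ))
            else 0))
      atTop (nhds 0) := by
  obtain ⟨c, hc⟩ := (hB₁bd.union hB₂bd).insert 0
  have hc0 : c ≤ 0 := hc (mem_insert _ _)
  have hB₁c : B₁ ⊆ Ici c := fun x hx => hc (.inr (.inl hx))
  have hB₂c : B₂ ⊆ Ici c := fun y hy => hc (.inr (.inr hy))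
  set k := r₂ - r₁ - 1
  set A : ℝ := (r₁ + k) ! * 2 ^ (r₁ + k) * exp ((1 - c) / 2)
  set I : ℝ := ∫ x in Ici c, exp (-4⁻¹ * x) with hI_def
  have hI : IntegrableOn (fun x => exp (-4⁻¹ * x)) (Ici c) :=
    (integrableOn_Ici_iff_integrableOn_Ioi).2 (exp_neg_integrableOn_Ioi c (by norm_num))
  have hlog : Tendsto (fun n : ℕ => log n) atTop atTop :=
    tendsto_log_atTop.comp tendsto_natCast_atTop_atTop
  refine squeeze_zero' (g := fun n : ℕ => A * I * I / (r₁ ! * k !) / log n ^ r₂) ?_ ?_ ?_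
  · filter_upwards with n
    have hlog_nonneg := log_natCast_nonneg n
    exact mul_nonneg (by positivity) <| setIntegral_nonneg_of_ae <| ae_of_all _ fun x =>
      integral_nonneg fun y => gammaPairDensity_nonneg (by positivity)
  · filter_upwards [hlog.eventually_ge_atTop 1, eventually_gt_atTop 0] with n hL hn
    have hD : (0 : ℝ) ≤ n * r₁ ! * k ! := by positivity
    calc _ ≤ (n : ℝ) / log n ^ (r₁ + r₂) *
          ((∫ x in Ici c, log n ^ r₁ * A / (n * r₁ ! * k !) * exp (-4⁻¹ * x)) * I) := by
          gcongr
          exact setIntegral_setIntegral_le_mul_of_le_mul hB₁c hB₂c measurableSet_Ici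
            measurableSet_Ici (fun x y => gammaPairDensity_nonneg hD) (hI.const_mul _) hI
            fun x hx y hy => gammaPairDensity_le hc0 hL hD hx hy
      _ = A * I * I / (r₁ ! * k !) / log n ^ r₂ := by
          rw [integral_const_mul, ← hI_def]
          field_simp
          ring
  · exact tendsto_const_nhds.div_atTop ((tendsto_pow_atTop (by omega)).comp hlog)

/-- For `0 ≤ r₁ < r₂`, Borel sets `B₁, B₂` bounded from below, and
`P^(n) = P{ψ(Z_{r₁}^(n)) ∈ B₁, ψ(Z_{r₂}^(n)) ∈ B₂}` (written via the joint density
of the centered gamma pair), one has `n·(ln n)^{-r₁-r₂}·P^(n) → 0`. -/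
theorem limit_pair_probability
    (r₁ r₂ : ℕ) (hr : r₁ < r₂)
    (B₁ B₂ : Set ℝ) (hB₁ : MeasurableSet B₁) (hB₂ : MeasurableSet B₂)
    (hB₁bd : BddBelow B₁) (hB₂bd : BddBelow B₂) :
    Tendsto (fun n : ℕ =>
        (n : ℝ) / (Real.log n) ^ (r₁ + r₂) *
          ∫ x in B₁, ∫ y in B₂,
            (if -Real.log n ≤ x ∧ x ≤ y then
              (x + Real.log n) ^ r₁ * (y - x) ^ (r₂ - r₁ - 1) * Real.exp (-y)
                / (n * (Nat.factorial r₁ : ℝ) * (Nat.factorial (r₂ - r₁ - 1) : ℝ))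
            else 0))
      atTop (nhds 0) :=
  limit_pair_probability_general r₁ r₂ hr B₁ B₂ hB₁bd hB₂bd
end
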